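/- The Fourier cosine coefficients a_n = (1/π)·∫_{−π}^{π} g(t)·cos(nt) dt of the function g satisfy: a_0 = 1 + 4/π, a_1 = −1/π − 1/2, and for n ≥ 2, a_n = −4/((n² − 1)π) if n ≡ 0 (mod 4), a_n = −2/(n(n+1)π) if n ≡ 1 (mod 4), a_n = 0 if n ≡ 2 (mod 4), and a_n = −2/(n(n−1)π) if n ≡ 3 (mod 4). Moreover, for every t ∈ ℝ, g(t) = a_0/2 + Σ_{n=1}^∞ a_n·cos(nt), the series converging absolutely. -/

import Mathlib

open Finset

/-- The 2π-periodic function `g` given on `[0, 2π)` by `sin t` on `[0, π/2]`,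
`1 − cos t` on `(π/2, 3π/2)` and `−sin t` on `[3π/2, 2π)`. -/
noncomputable def gfun (t : ℝ) : ℝ :=
  let s := t - 2 * Real.pi * ⌊t / (2 * Real.pi)⌋
  if s ≤ Real.pi / 2 then Real.sin s
  else if s < 3 * Real.pi / 2 then 1 - Real.cos s
  else -Real.sin s

/-- The Fourier cosine coefficients `a_n = (1/π)·∫_{−π}^{π} g(t)·cos(nt) dt` of `g`. -/
noncomputable def aCoef (n : ℕ) : ℝ :=
  (1 / Real.pi) * ∫ t in (-Real.pi)..Real.pi, gfun t * Real.cos (n * t)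

open Real

lemma branch_eq_max {s : ℝ} (h0 : 0 ≤ s) (h2 : s < 2 * π) :
    (if s ≤ π / 2 then Real.sin s
      else if s < 3 * π / 2 then 1 - Real.cos s
      else -Real.sin s) = max |Real.sin s| (1 - Real.cos s) := by
  have hpi := Real.pi_pos
  have hs1 := Real.sin_sq_add_cos_sq s
  split_ifs with h1 hb
  · -- 0 ≤ s ≤ π/2
    have hsin : 0 ≤ Real.sin s := Real.sin_nonneg_of_nonneg_of_le_pi h0 (by linarith)
    have hcos : 0 ≤ Real.cos s := Real.cos_nonneg_of_mem_Icc ⟨by linarith, by linarith⟩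
    have hsin1 : Real.sin s ≤ 1 := Real.sin_le_one s
    have hcos1 : Real.cos s ≤ 1 := Real.cos_le_one s
    rw [abs_of_nonneg hsin, max_eq_left (by nlinarith)]
  · -- π/2 < s < 3π/2
    have hcos : Real.cos s ≤ 0 :=
      Real.cos_nonpos_of_pi_div_two_le_of_le (le_of_lt (lt_of_not_ge h1)) (by linarith)
    have h1' : Real.sin s ≤ 1 := Real.sin_le_one s
    have h2' : -1 ≤ Real.sin s := Real.neg_one_le_sin s
    rw [max_eq_right (abs_le.2 ⟨by linarith, by linarith⟩)]
  · -- 3π/2 ≤ s < 2π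
    have h3 : 3 * π / 2 ≤ s := le_of_not_gt hb
    have h4 : 0 ≤ 2 * π - s := by linarith
    have h5 : 2 * π - s ≤ π / 2 := by linarith
    have hsin' : 0 ≤ Real.sin (2 * π - s) := Real.sin_nonneg_of_nonneg_of_le_pi h4 (by linarith)
    have hcos' : 0 ≤ Real.cos (2 * π - s) := Real.cos_nonneg_of_mem_Icc ⟨by linarith, by linarith⟩
    rw [Real.sin_sub, Real.sin_two_pi, Real.cos_two_pi] at hsin'
    rw [Real.cos_sub, Real.sin_two_pi, Real.cos_two_pi] at hcos'
    have hsin : Real.sin s ≤ 0 := by linarith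
    have hcos : 0 ≤ Real.cos s := by linarith
    have hsin1 : -1 ≤ Real.sin s := Real.neg_one_le_sin s
    have hcos1 : Real.cos s ≤ 1 := Real.cos_le_one s
    rw [abs_of_nonpos hsin, max_eq_left (by nlinarith)]

lemma gfun_eq (t : ℝ) : gfun t = max |Real.sin t| (1 - Real.cos t) := by
  have hpi := Real.pi_pos
  have h2pi : (0:ℝ) < 2 * π := by linarith
  set k : ℤ := ⌊t / (2 * π)⌋ with hk
  set s : ℝ := t - 2 * π * k with hs
  have hfr : s = 2 * π * Int.fract (t / (2 * π)) := by
    rw [hs, Int.fract]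
    field_simp
    rw [hk]
  have h0 : 0 ≤ s := by
    rw [hfr]; exact mul_nonneg (by positivity) (Int.fract_nonneg _)
  have h2 : s < 2 * π := by
    rw [hfr]
    have := Int.fract_lt_one (t / (2 * π))
    nlinarith
  have hts : t = s + k * (2 * π) := by rw [hs]; ring
  have hsin : Real.sin t = Real.sin s := by rw [hts, Real.sin_add_int_mul_two_pi]
  have hcos : Real.cos t = Real.cos s := by rw [hts, Real.cos_add_int_mul_two_pi]
  rw [hsin, hcos]
  show (if s ≤ π / 2 then Real.sin s else if s < 3 * π / 2 then 1 - Real.cos s else -Real.sin s)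
      = _
  exact branch_eq_max h0 h2

lemma gfun_continuous : Continuous gfun := by
  have : gfun = fun t => max |Real.sin t| (1 - Real.cos t) := funext gfun_eq
  rw [this]
  exact (Real.continuous_sin.abs).max (continuous_const.sub Real.continuous_cos)

lemma gfun_even (t : ℝ) : gfun (-t) = gfun t := by
  simp [gfun_eq, Real.sin_neg, Real.cos_neg, abs_neg]

lemma gfun_periodic : Function.Periodic gfun (2 * π) := by
  intro t
  simp [gfun_eq, Real.sin_add_two_pi, Real.cos_add_two_pi]

lemma gfun_eq_sin {t : ℝ} (h0 : 0 ≤ t) (h1 : t ≤ π / 2) : gfun t = Real.sin t := by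
  have hpi := Real.pi_pos
  have hs1 := Real.sin_sq_add_cos_sq t
  have hsin : 0 ≤ Real.sin t := Real.sin_nonneg_of_nonneg_of_le_pi h0 (by linarith)
  have hcos : 0 ≤ Real.cos t := Real.cos_nonneg_of_mem_Icc ⟨by linarith, by linarith⟩
  have hsin1 : Real.sin t ≤ 1 := Real.sin_le_one t
  have hcos1 : Real.cos t ≤ 1 := Real.cos_le_one t
  rw [gfun_eq, abs_of_nonneg hsin, max_eq_left (by nlinarith)]

lemma gfun_eq_one_sub_cos {t : ℝ} (h0 : π / 2 ≤ t) (h1 : t ≤ 3 * π / 2) :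
    gfun t = 1 - Real.cos t := by
  have hcos : Real.cos t ≤ 0 := Real.cos_nonpos_of_pi_div_two_le_of_le h0 (by linarith)
  have h1' : Real.sin t ≤ 1 := Real.sin_le_one t
  have h2' : -1 ≤ Real.sin t := Real.neg_one_le_sin t
  rw [gfun_eq, max_eq_right (abs_le.2 ⟨by linarith, by linarith⟩)]

lemma gfun_eq_neg_sin {t : ℝ} (h0 : 3 * π / 2 ≤ t) (h1 : t ≤ 2 * π) : gfun t = -Real.sin t := by
  have hpi := Real.pi_pos
  have hs1 := Real.sin_sq_add_cos_sq t
  have h4 : 0 ≤ 2 * π - t := by linarith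
  have h5 : 2 * π - t ≤ π / 2 := by linarith
  have hsin' : 0 ≤ Real.sin (2 * π - t) := Real.sin_nonneg_of_nonneg_of_le_pi h4 (by linarith)
  have hcos' : 0 ≤ Real.cos (2 * π - t) := Real.cos_nonneg_of_mem_Icc ⟨by linarith, by linarith⟩
  rw [Real.sin_sub, Real.sin_two_pi, Real.cos_two_pi] at hsin'
  rw [Real.cos_sub, Real.sin_two_pi, Real.cos_two_pi] at hcos'
  have hsin : Real.sin t ≤ 0 := by linarith
  have hcos : 0 ≤ Real.cos t := by linarith
  have hsin1 : -1 ≤ Real.sin t := Real.neg_one_le_sin t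
  have hcos1 : Real.cos t ≤ 1 := Real.cos_le_one t
  rw [gfun_eq, abs_of_nonpos hsin, max_eq_left (by nlinarith)]

lemma integral_sin_mul (c : ℝ) (hc : c ≠ 0) (a b : ℝ) :
    ∫ t in a..b, Real.sin (c * t) = (Real.cos (c * a) - Real.cos (c * b)) / c := by
  have key : ∀ t : ℝ, HasDerivAt (fun u => -Real.cos (c * u) / c) (Real.sin (c * t)) t := by
    intro t
    have h1 : HasDerivAt (fun u : ℝ => c * u) c t := by
      simpa using (hasDerivAt_id t).const_mul c
    have h2 := (Real.hasDerivAt_cos (c * t)).comp t h1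
    have h3 := (h2.neg).div_const c
    rw [show Real.sin (c * t) = -(-Real.sin (c * t) * c) / c by
      rw [neg_mul, neg_neg, mul_div_assoc, div_self hc, mul_one]]
    exact h3
  rw [intervalIntegral.integral_eq_sub_of_hasDerivAt (fun t _ => key t)
    ((Real.continuous_sin.comp (continuous_const.mul continuous_id)).intervalIntegrable a b)]
  ring

lemma integral_cos_mul (c : ℝ) (hc : c ≠ 0) (a b : ℝ) :
    ∫ t in a..b, Real.cos (c * t) = (Real.sin (c * b) - Real.sin (c * a)) / c := by
  have key : ∀ t : ℝ, HasDerivAt (fun u => Real.sin (c * u) / c) (Real.cos (c * t)) t := by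
    intro t
    have h1 : HasDerivAt (fun u : ℝ => c * u) c t := by
      simpa using (hasDerivAt_id t).const_mul c
    have h2 := (Real.hasDerivAt_sin (c * t)).comp t h1
    have h3 := h2.div_const c
    rw [show Real.cos (c * t) = Real.cos (c * t) * c / c by
      rw [mul_div_assoc, div_self hc, mul_one]]
    exact h3
  rw [intervalIntegral.integral_eq_sub_of_hasDerivAt (fun t _ => key t)
    ((Real.continuous_cos.comp (continuous_const.mul continuous_id)).intervalIntegrable a b)]
  ring

lemma integral_sin_mul_cos' (m a b : ℝ) (h1 : m + 1 ≠ 0) (h2 : 1 - m ≠ 0) :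
    ∫ t in a..b, Real.sin t * Real.cos (m * t)
      = ((Real.cos ((m+1)*a) - Real.cos ((m+1)*b)) / (m+1)
        + (Real.cos ((1-m)*a) - Real.cos ((1-m)*b)) / (1-m)) / 2 := by
  have key : ∀ t : ℝ, Real.sin t * Real.cos (m*t)
      = (Real.sin ((m+1)*t) + Real.sin ((1-m)*t)) / 2 := by
    intro t
    rw [show (m+1)*t = m*t + t by ring, show (1-m)*t = t - m*t by ring,
      Real.sin_add, Real.sin_sub]
    ring
  rw [intervalIntegral.integral_congr (g := fun t => (Real.sin ((m+1)*t) + Real.sin ((1-m)*t))/2)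
    (fun t _ => key t)]
  rw [intervalIntegral.integral_div, intervalIntegral.integral_add
    ((by fun_prop : Continuous fun t : ℝ => Real.sin ((m+1)*t)).intervalIntegrable a b)
    ((by fun_prop : Continuous fun t : ℝ => Real.sin ((1-m)*t)).intervalIntegrable a b),
    integral_sin_mul _ h1, integral_sin_mul _ h2]

lemma integral_cos_mul_cos' (m a b : ℝ) (h1 : m + 1 ≠ 0) (h2 : 1 - m ≠ 0) :
    ∫ t in a..b, Real.cos t * Real.cos (m * t)
      = ((Real.sin ((m+1)*b) - Real.sin ((m+1)*a)) / (m+1)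
        + (Real.sin ((1-m)*b) - Real.sin ((1-m)*a)) / (1-m)) / 2 := by
  have key : ∀ t : ℝ, Real.cos t * Real.cos (m*t)
      = (Real.cos ((m+1)*t) + Real.cos ((1-m)*t)) / 2 := by
    intro t
    rw [show (m+1)*t = m*t + t by ring, show (1-m)*t = t - m*t by ring,
      Real.cos_add, Real.cos_sub]
    ring
  rw [intervalIntegral.integral_congr (g := fun t => (Real.cos ((m+1)*t) + Real.cos ((1-m)*t))/2)
    (fun t _ => key t)]
  rw [intervalIntegral.integral_div, intervalIntegral.integral_add
    ((by fun_prop : Continuous fun t : ℝ => Real.cos ((m+1)*t)).intervalIntegrable a b)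
    ((by fun_prop : Continuous fun t : ℝ => Real.cos ((1-m)*t)).intervalIntegrable a b),
    integral_cos_mul _ h1, integral_cos_mul _ h2]

lemma integral_shift (n : ℕ) :
    (∫ t in (-π)..π, gfun t * Real.cos (n * t))
      = ∫ t in (0:ℝ)..(2*π), gfun t * Real.cos (n * t) := by
  have hper : Function.Periodic (fun t => gfun t * Real.cos ((n:ℝ) * t)) (2 * π) := by
    intro x
    have h1 : (n:ℝ) * (x + 2*π) = n*x + (n:ℕ) * (2*π) := by push_cast; ring
    simp only [gfun_periodic x, h1, Real.cos_add_nat_mul_two_pi]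
  have h := hper.intervalIntegral_add_eq (-π) 0
  rw [show -π + 2*π = π by ring, zero_add] at h
  exact h

lemma integral_split (n : ℕ) :
    (∫ t in (0:ℝ)..(2*π), gfun t * Real.cos (n * t))
      = (∫ t in (0:ℝ)..(π/2), gfun t * Real.cos (n * t))
        + (∫ t in (π/2)..(3*π/2), gfun t * Real.cos (n * t))
        + (∫ t in (3*π/2)..(2*π), gfun t * Real.cos (n * t)) := by
  have hint : ∀ a b : ℝ, IntervalIntegrable (fun t => gfun t * Real.cos ((n:ℝ) * t))
      MeasureTheory.volume a b := fun a b =>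
    (gfun_continuous.mul (by fun_prop)).intervalIntegrable a b
  rw [← intervalIntegral.integral_add_adjacent_intervals (hint 0 (3*π/2)) (hint (3*π/2) (2*π)),
    ← intervalIntegral.integral_add_adjacent_intervals (hint 0 (π/2)) (hint (π/2) (3*π/2))]

lemma I_eq (n : ℕ) (hn : 2 ≤ n) :
    (∫ t in (-π)..π, gfun t * Real.cos (n * t))
      = (1 + Real.sin (n*(π/2)))/((n:ℝ)+1) + (1 - Real.sin (n*(π/2)))/(1-(n:ℝ))
        - 2*Real.sin (n*(π/2))/(n:ℝ)
        + Real.cos (n*(π/2))/((n:ℝ)+1) + Real.cos (n*(π/2))/(1-(n:ℝ)) := by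
  have hpi := Real.pi_pos
  have hn2 : (2:ℝ) ≤ (n:ℝ) := by exact_mod_cast hn
  set m : ℝ := (n:ℝ) with hm'
  have hA : m + 1 ≠ 0 := by intro h; nlinarith
  have hB : 1 - m ≠ 0 := by intro h; nlinarith
  have hm : m ≠ 0 := by intro h; nlinarith
  -- endpoint trig evaluations
  have e1 : Real.cos ((m+1)*(π/2)) = -Real.sin (m*(π/2)) := by
    rw [show (m+1)*(π/2) = m*(π/2) + π/2 by ring, Real.cos_add_pi_div_two]
  have e2 : Real.cos ((1-m)*(π/2)) = Real.sin (m*(π/2)) := by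
    rw [show (1-m)*(π/2) = π/2 - m*(π/2) by ring, Real.cos_pi_div_two_sub]
  have e3 : Real.sin ((m+1)*(π/2)) = Real.cos (m*(π/2)) := by
    rw [show (m+1)*(π/2) = m*(π/2) + π/2 by ring, Real.sin_add_pi_div_two]
  have e4 : Real.sin ((1-m)*(π/2)) = Real.cos (m*(π/2)) := by
    rw [show (1-m)*(π/2) = π/2 - m*(π/2) by ring, Real.sin_pi_div_two_sub]
  have e5 : Real.cos ((m+1)*(2*π)) = 1 := by
    rw [show (m+1)*(2*π) = ((n+1 : ℕ):ℝ)*(2*π) by push_cast; ring, Real.cos_nat_mul_two_pi]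
  have e6 : Real.cos ((1-m)*(2*π)) = 1 := by
    rw [show (1-m)*(2*π) = ((1 - (n:ℤ) : ℤ):ℝ)*(2*π) by push_cast; ring, Real.cos_int_mul_two_pi]
  have e7 : Real.cos ((m+1)*(3*π/2)) = -Real.sin (m*(π/2)) := by
    rw [show (m+1)*(3*π/2) = -((m+1)*(π/2)) + (((n:ℤ)+1 : ℤ):ℝ)*(2*π) by push_cast; ring,
      Real.cos_add_int_mul_two_pi, Real.cos_neg, e1]
  have e8 : Real.cos ((1-m)*(3*π/2)) = Real.sin (m*(π/2)) := by
    rw [show (1-m)*(3*π/2) = -((1-m)*(π/2)) + ((1-(n:ℤ) : ℤ):ℝ)*(2*π) by push_cast; ring,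
      Real.cos_add_int_mul_two_pi, Real.cos_neg, e2]
  have e9 : Real.sin ((m+1)*(3*π/2)) = -Real.cos (m*(π/2)) := by
    rw [show (m+1)*(3*π/2) = -((m+1)*(π/2)) + (((n:ℤ)+1 : ℤ):ℝ)*(2*π) by push_cast; ring,
      Real.sin_add_int_mul_two_pi, Real.sin_neg, e3]
  have e10 : Real.sin ((1-m)*(3*π/2)) = -Real.cos (m*(π/2)) := by
    rw [show (1-m)*(3*π/2) = -((1-m)*(π/2)) + ((1-(n:ℤ) : ℤ):ℝ)*(2*π) by push_cast; ring,
      Real.sin_add_int_mul_two_pi, Real.sin_neg, e4]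
  have e12 : Real.sin (m*(3*π/2)) = -Real.sin (m*(π/2)) := by
    rw [show m*(3*π/2) = -(m*(π/2)) + (((n:ℤ) : ℤ):ℝ)*(2*π) by push_cast; ring,
      Real.sin_add_int_mul_two_pi, Real.sin_neg]
  -- piece 1
  have P1 : (∫ t in (0:ℝ)..(π/2), gfun t * Real.cos (m * t))
      = ((Real.cos ((m+1)*0) - Real.cos ((m+1)*(π/2))) / (m+1)
        + (Real.cos ((1-m)*0) - Real.cos ((1-m)*(π/2))) / (1-m)) / 2 := by
    rw [intervalIntegral.integral_congr (g := fun t => Real.sin t * Real.cos (m*t))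
      (by
        rw [Set.uIcc_of_le (by linarith : (0:ℝ) ≤ π/2)]
        intro t ht
        simp only
        rw [gfun_eq_sin ht.1 ht.2])]
    exact integral_sin_mul_cos' m 0 (π/2) hA hB
  -- piece 2
  have P2 : (∫ t in (π/2)..(3*π/2), gfun t * Real.cos (m * t))
      = (Real.sin (m*(3*π/2)) - Real.sin (m*(π/2))) / m
        - ((Real.sin ((m+1)*(3*π/2)) - Real.sin ((m+1)*(π/2))) / (m+1)
          + (Real.sin ((1-m)*(3*π/2)) - Real.sin ((1-m)*(π/2))) / (1-m)) / 2 := by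
    rw [intervalIntegral.integral_congr
      (g := fun t => Real.cos (m*t) - Real.cos t * Real.cos (m*t))
      (by
        rw [Set.uIcc_of_le (by linarith : π/2 ≤ 3*π/2)]
        intro t ht
        simp only
        rw [gfun_eq_one_sub_cos ht.1 ht.2]; ring)]
    rw [intervalIntegral.integral_sub
      ((by fun_prop : Continuous fun t : ℝ => Real.cos (m*t)).intervalIntegrable _ _)
      ((by fun_prop : Continuous fun t : ℝ => Real.cos t * Real.cos (m*t)).intervalIntegrable _ _),
      integral_cos_mul m hm, integral_cos_mul_cos' m _ _ hA hB]
  -- piece 3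
  have P3 : (∫ t in (3*π/2)..(2*π), gfun t * Real.cos (m * t))
      = -(((Real.cos ((m+1)*(3*π/2)) - Real.cos ((m+1)*(2*π))) / (m+1)
        + (Real.cos ((1-m)*(3*π/2)) - Real.cos ((1-m)*(2*π))) / (1-m)) / 2) := by
    rw [intervalIntegral.integral_congr (g := fun t => -(Real.sin t * Real.cos (m*t)))
      (by
        rw [Set.uIcc_of_le (by linarith : 3*π/2 ≤ 2*π)]
        intro t ht
        simp only
        rw [gfun_eq_neg_sin ht.1 ht.2]; ring),
      intervalIntegral.integral_neg, integral_sin_mul_cos' m _ _ hA hB]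
  rw [integral_shift n, integral_split n, P1, P2, P3, e1, e2, e3, e4, e5, e6, e7, e8, e9,
    e10, e12, mul_zero, Real.cos_zero]
  generalize Real.sin (m*(π/2)) = s
  generalize Real.cos (m*(π/2)) = c
  field_simp
  norm_num
  ring


lemma sin_three_pi_div_two : Real.sin (3*π/2) = -1 := by
  rw [show 3*π/2 = π + π/2 by ring, Real.sin_add, Real.sin_pi, Real.cos_pi]
  simp

lemma cos_three_pi_div_two : Real.cos (3*π/2) = 0 := by
  rw [show 3*π/2 = π + π/2 by ring, Real.cos_add, Real.sin_pi, Real.cos_pi]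
  simp

lemma aCoef_zero : aCoef 0 = 1 + 4 / π := by
  have hpi := Real.pi_pos
  have h0 : ∀ t : ℝ, gfun t * Real.cos ((0:ℕ) * t) = gfun t := by
    intro t; simp
  unfold aCoef
  rw [integral_shift 0, integral_split 0]
  have P1 : (∫ t in (0:ℝ)..(π/2), gfun t * Real.cos ((0:ℕ) * t)) = 1 := by
    rw [intervalIntegral.integral_congr (g := fun t => Real.sin t)
      (by
        rw [Set.uIcc_of_le (by linarith : (0:ℝ) ≤ π/2)]
        intro t ht
        simp only
        rw [h0, gfun_eq_sin ht.1 ht.2]),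
      integral_sin]
    simp
  have P2 : (∫ t in (π/2)..(3*π/2), gfun t * Real.cos ((0:ℕ) * t)) = π + 2 := by
    rw [intervalIntegral.integral_congr (g := fun t => 1 - Real.cos t)
      (by
        rw [Set.uIcc_of_le (by linarith : π/2 ≤ 3*π/2)]
        intro t ht
        simp only
        rw [h0, gfun_eq_one_sub_cos ht.1 ht.2]),
      intervalIntegral.integral_sub intervalIntegrable_const
        (Real.continuous_cos.intervalIntegrable _ _),
      integral_cos, intervalIntegral.integral_const, sin_three_pi_div_two, Real.sin_pi_div_two]
    simp
    ring
  have P3 : (∫ t in (3*π/2)..(2*π), gfun t * Real.cos ((0:ℕ) * t)) = 1 := by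
    rw [intervalIntegral.integral_congr (g := fun t => -Real.sin t)
      (by
        rw [Set.uIcc_of_le (by linarith : 3*π/2 ≤ 2*π)]
        intro t ht
        simp only
        rw [h0, gfun_eq_neg_sin ht.1 ht.2]),
      intervalIntegral.integral_neg, integral_sin, cos_three_pi_div_two, Real.cos_two_pi]
    simp
  rw [P1, P2, P3]
  field_simp
  ring

lemma aCoef_one : aCoef 1 = -(1/π) - 1/2 := by
  have hpi := Real.pi_pos
  have h1 : ∀ t : ℝ, gfun t * Real.cos ((1:ℕ) * t) = gfun t * Real.cos t := by
    intro t; norm_num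
  unfold aCoef
  rw [integral_shift 1, integral_split 1]
  have P1 : (∫ t in (0:ℝ)..(π/2), gfun t * Real.cos ((1:ℕ) * t)) = 1/2 := by
    rw [intervalIntegral.integral_congr (g := fun t => Real.sin t * Real.cos t)
      (by
        rw [Set.uIcc_of_le (by linarith : (0:ℝ) ≤ π/2)]
        intro t ht
        simp only
        rw [h1, gfun_eq_sin ht.1 ht.2]),
      integral_sin_mul_cos₁]
    simp
  have P2 : (∫ t in (π/2)..(3*π/2), gfun t * Real.cos ((1:ℕ) * t)) = -2 - π/2 := by
    rw [intervalIntegral.integral_congr (g := fun t => Real.cos t - Real.cos t ^ 2)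
      (by
        rw [Set.uIcc_of_le (by linarith : π/2 ≤ 3*π/2)]
        intro t ht
        simp only
        rw [h1, gfun_eq_one_sub_cos ht.1 ht.2]; ring),
      intervalIntegral.integral_sub (g := fun t => Real.cos t ^ 2) (Real.continuous_cos.intervalIntegrable _ _)
        ((Real.continuous_cos.pow 2 : Continuous fun t : ℝ => Real.cos t ^ 2).intervalIntegrable _ _),
      integral_cos, integral_cos_sq, sin_three_pi_div_two, Real.sin_pi_div_two,
      cos_three_pi_div_two, Real.cos_pi_div_two]
    ring
  have P3 : (∫ t in (3*π/2)..(2*π), gfun t * Real.cos ((1:ℕ) * t)) = 1/2 := by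
    rw [intervalIntegral.integral_congr (g := fun t => -(Real.sin t * Real.cos t))
      (by
        rw [Set.uIcc_of_le (by linarith : 3*π/2 ≤ 2*π)]
        intro t ht
        simp only
        rw [h1, gfun_eq_neg_sin ht.1 ht.2]; ring),
      intervalIntegral.integral_neg, integral_sin_mul_cos₁, Real.sin_two_pi,
      sin_three_pi_div_two]
    norm_num
  rw [P1, P2, P3]
  field_simp
  ring

lemma trig_val (n r : ℕ) (h : n % 4 = r) :
    Real.sin ((n:ℝ)*(π/2)) = Real.sin ((r:ℝ)*(π/2))
      ∧ Real.cos ((n:ℝ)*(π/2)) = Real.cos ((r:ℝ)*(π/2)) := by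
  obtain ⟨q, hq⟩ : ∃ q : ℕ, n = 4 * q + r := ⟨n / 4, by rw [← h]; exact (Nat.div_add_mod n 4).symm⟩
  have key : (n:ℝ)*(π/2) = (r:ℝ)*(π/2) + ((q : ℤ) : ℝ)*(2*π) := by
    rw [hq]
    push_cast
    ring
  rw [key, Real.sin_add_int_mul_two_pi, Real.cos_add_int_mul_two_pi]
  exact ⟨rfl, rfl⟩

lemma aCoef_cases (n : ℕ) (hn : 2 ≤ n) :
    (n % 4 = 0 → aCoef n = -(4 / (((n : ℝ) ^ 2 - 1) * Real.pi))) ∧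
    (n % 4 = 1 → aCoef n = -(2 / ((n : ℝ) * ((n : ℝ) + 1) * Real.pi))) ∧
    (n % 4 = 2 → aCoef n = 0) ∧
    (n % 4 = 3 → aCoef n = -(2 / ((n : ℝ) * ((n : ℝ) - 1) * Real.pi))) := by
  have hpi := Real.pi_pos
  have hn2 : (2:ℝ) ≤ (n:ℝ) := by exact_mod_cast hn
  have hA : (n:ℝ) + 1 ≠ 0 := by nlinarith
  have hB : 1 - (n:ℝ) ≠ 0 := by intro h; nlinarith
  have hm : (n:ℝ) ≠ 0 := by nlinarith
  have hpi' : π ≠ 0 := ne_of_gt hpi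
  have hC : (n:ℝ) - 1 ≠ 0 := by nlinarith
  have hI := I_eq n hn
  refine ⟨fun h => ?_, fun h => ?_, fun h => ?_, fun h => ?_⟩
  · obtain ⟨hs, hc⟩ := trig_val n 0 h
    simp only [Nat.cast_zero, zero_mul, Real.sin_zero, Real.cos_zero] at hs hc
    unfold aCoef
    rw [hI, hs, hc]
    have hD : (n:ℝ)^2 - 1 ≠ 0 := by nlinarith
    field_simp
    ring
  · obtain ⟨hs, hc⟩ := trig_val n 1 h
    simp only [Nat.cast_one, one_mul, Real.sin_pi_div_two, Real.cos_pi_div_two] at hs hc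
    unfold aCoef
    rw [hI, hs, hc]
    field_simp
    ring
  · obtain ⟨hs, hc⟩ := trig_val n 2 h
    rw [show ((2:ℕ):ℝ)*(π/2) = π by push_cast; ring] at hs hc
    rw [Real.sin_pi] at hs
    rw [Real.cos_pi] at hc
    unfold aCoef
    rw [hI, hs, hc]
    field_simp
    ring
  · obtain ⟨hs, hc⟩ := trig_val n 3 h
    rw [show ((3:ℕ):ℝ)*(π/2) = 3*π/2 by push_cast; ring] at hs hc
    rw [sin_three_pi_div_two] at hs
    rw [cos_three_pi_div_two] at hc
    unfold aCoef
    rw [hI, hs, hc]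
    field_simp
    ring

lemma gfun_sin_integral (c : ℝ) : (∫ t in (-π)..π, gfun t * Real.sin (c * t)) = 0 := by
  have key : ∀ x : ℝ, gfun (-x) * Real.sin (c * -x) = -(gfun x * Real.sin (c * x)) := by
    intro x
    rw [gfun_even, mul_neg, Real.sin_neg]
    ring
  have h := intervalIntegral.integral_comp_neg (fun t => gfun t * Real.sin (c * t))
    (a := -π) (b := π)
  simp only [neg_neg] at h
  rw [intervalIntegral.integral_congr (g := fun x => -(gfun x * Real.sin (c * x)))
    (fun x _ => key x), intervalIntegral.integral_neg] at h
  linarith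

instance fact_two_pi_pos : Fact (0 < 2 * π) := ⟨by positivity⟩

lemma gfunC_periodic : Function.Periodic (fun t : ℝ => ((gfun t : ℝ) : ℂ)) (2 * π) :=
  fun x => by simp [gfun_periodic x]

noncomputable def Gmap : C(AddCircle (2 * π), ℂ) :=
  ⟨gfunC_periodic.lift,
    continuous_coinduced_dom.mpr (Complex.continuous_ofReal.comp gfun_continuous)⟩

lemma Gmap_coe (x : ℝ) : Gmap ((x : ℝ) : AddCircle (2 * π)) = ((gfun x : ℝ) : ℂ) := by
  rfl

lemma fourierCoeff_G (n : ℤ) :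
    fourierCoeff (⇑Gmap) n
      = (((1/(2*π)) * ∫ t in (-π)..π, gfun t * Real.cos ((n:ℝ) * t) : ℝ) : ℂ) := by
  have hpi := Real.pi_pos
  rw [fourierCoeff_eq_intervalIntegral (⇑Gmap) n (-π), show -π + 2*π = π by ring]
  have key : ∀ x : ℝ, (fourier (-n) ((x : ℝ) : AddCircle (2*π))) • (⇑Gmap) ((x : ℝ) : AddCircle (2*π))
      = ((gfun x * Real.cos ((n:ℝ)*x) : ℝ) : ℂ)
        + Complex.I • ((-(gfun x * Real.sin ((n:ℝ)*x)) : ℝ) : ℂ) := by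
    intro x
    rw [Gmap_coe, fourier_coe_apply, smul_eq_mul]
    have harg : 2 * (π:ℝ) * Complex.I * (-n : ℤ) * (x:ℝ) / ((2 * π : ℝ):ℂ)
        = ((-((n:ℝ) * x) : ℝ) : ℂ) * Complex.I := by
      have hpic : ((π:ℝ):ℂ) ≠ 0 := Complex.ofReal_ne_zero.mpr Real.pi_ne_zero
      push_cast
      field_simp
    rw [harg, Complex.exp_mul_I, ← Complex.ofReal_cos, ← Complex.ofReal_sin,
      Real.cos_neg, Real.sin_neg]
    push_cast
    rw [smul_eq_mul]
    ring
  rw [intervalIntegral.integral_congr (fun x _ => key x)]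
  have int1 : IntervalIntegrable (fun x : ℝ => ((gfun x * Real.cos ((n:ℝ)*x) : ℝ) : ℂ))
      MeasureTheory.volume (-π) π :=
    (Complex.continuous_ofReal.comp (gfun_continuous.mul (by fun_prop))).intervalIntegrable _ _
  have int2 : IntervalIntegrable
      (fun x : ℝ => Complex.I • ((-(gfun x * Real.sin ((n:ℝ)*x)) : ℝ) : ℂ))
      MeasureTheory.volume (-π) π := by
    apply Continuous.intervalIntegrable
    exact (continuous_const : Continuous fun _ : ℝ => Complex.I).smul
      (Complex.continuous_ofReal.comp ((gfun_continuous.mul (by fun_prop : Continuous fun x : ℝ => Real.sin ((n:ℝ)*x))).neg))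
  rw [intervalIntegral.integral_add int1 int2, intervalIntegral.integral_smul]
  rw [intervalIntegral.integral_ofReal, intervalIntegral.integral_ofReal]
  rw [intervalIntegral.integral_neg, gfun_sin_integral ((n:ℝ))]
  simp [Complex.real_smul]

lemma integral_eq_pi_aCoef (n : ℕ) :
    (∫ t in (-π)..π, gfun t * Real.cos ((n:ℝ) * t)) = π * aCoef n := by
  have hpi := Real.pi_ne_zero
  unfold aCoef
  field_simp

lemma fourierCoeff_G_nat (n : ℕ) :
    fourierCoeff (⇑Gmap) (n : ℤ) = ((aCoef n / 2 : ℝ) : ℂ) := by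
  have hpi := Real.pi_ne_zero
  have hreal : (1/(2*π)) * (∫ t in (-π)..π, gfun t * Real.cos ((((n:ℤ)):ℝ) * t))
      = aCoef n / 2 := by
    rw [show ((((n:ℤ)):ℝ)) = ((n:ℕ):ℝ) by push_cast; ring, integral_eq_pi_aCoef n]
    field_simp
  rw [fourierCoeff_G (n : ℤ), hreal]

lemma fourierCoeff_G_neg_nat (n : ℕ) :
    fourierCoeff (⇑Gmap) (-(n : ℤ)) = ((aCoef n / 2 : ℝ) : ℂ) := by
  have hpi := Real.pi_ne_zero
  have hcong : (∫ t in (-π)..π, gfun t * Real.cos ((((-(n:ℤ) : ℤ)):ℝ) * t))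
      = ∫ t in (-π)..π, gfun t * Real.cos ((n:ℝ) * t) := by
    apply intervalIntegral.integral_congr
    intro x _
    simp only
    rw [show ((((-(n:ℤ) : ℤ)):ℝ)) * x = -((n:ℝ) * x) by push_cast; ring, Real.cos_neg]
  have hreal : (1/(2*π)) * (∫ t in (-π)..π, gfun t * Real.cos ((((-(n:ℤ) : ℤ)):ℝ) * t))
      = aCoef n / 2 := by
    rw [hcong, integral_eq_pi_aCoef n]
    field_simp
  rw [fourierCoeff_G (-(n : ℤ)), hreal]

lemma abs_aCoef_le (n : ℕ) (hn : 2 ≤ n) : |aCoef n| ≤ 8 / (n:ℝ)^2 := by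
  have hpi := Real.pi_pos
  have hpi3 := Real.pi_gt_three
  have hn2 : (2:ℝ) ≤ (n:ℝ) := by exact_mod_cast hn
  have hnsq : (0:ℝ) < (n:ℝ)^2 := by positivity
  have hD : (0:ℝ) < (n:ℝ)^2 - 1 := by nlinarith
  obtain ⟨h0, h1, h2, h3⟩ := aCoef_cases n hn
  have hr : n % 4 = 0 ∨ n % 4 = 1 ∨ n % 4 = 2 ∨ n % 4 = 3 := by omega
  rcases hr with h | h | h | h
  · rw [h0 h, abs_neg, abs_of_nonneg (by positivity)]
    rw [div_le_div_iff₀ (by positivity) hnsq]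
    nlinarith
  · rw [h1 h, abs_neg, abs_of_nonneg (by positivity)]
    rw [div_le_div_iff₀ (by positivity) hnsq]
    nlinarith
  · rw [h2 h, abs_zero]
    positivity
  · have hE : (0:ℝ) < (n:ℝ) - 1 := by nlinarith
    rw [h3 h, abs_neg, abs_of_nonneg (by positivity)]
    rw [div_le_div_iff₀ (by positivity) hnsq]
    nlinarith [mul_pos (mul_pos (by linarith : (0:ℝ) < (n:ℝ)) hE)
      (by linarith : (0:ℝ) < π - 3)]

lemma summable_abs_aCoef : Summable (fun n : ℕ => |aCoef n|) := by
  have h1 : Summable (fun n : ℕ => 8 * (1 / ((n:ℝ))^2)) :=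
    (summable_one_div_nat_pow.mpr one_lt_two).mul_left 8
  have h2 : Summable (fun n : ℕ => 8 * (1 / ((n+2:ℕ):ℝ)^2)) :=
    (summable_nat_add_iff 2).mpr h1
  rw [← summable_nat_add_iff 2]
  apply Summable.of_nonneg_of_le (fun n => abs_nonneg _) (fun n => ?_) h2
  refine le_trans (abs_aCoef_le (n+2) (by omega)) ?_
  rw [mul_one_div]

lemma summable_fourierCoeff_G : Summable (fun n : ℤ => fourierCoeff (⇑Gmap) n) := by
  apply Summable.of_nat_of_neg
  · apply Summable.of_norm
    have he : (fun n : ℕ => ‖fourierCoeff (⇑Gmap) (n:ℤ)‖) = fun n : ℕ => |aCoef n| / 2 := by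
      funext n
      rw [fourierCoeff_G_nat n]
      simp [Complex.norm_real, Real.norm_eq_abs, abs_div]
    rw [he]
    exact summable_abs_aCoef.div_const 2
  · apply Summable.of_norm
    have he : (fun n : ℕ => ‖fourierCoeff (⇑Gmap) (-(n:ℤ))‖) = fun n : ℕ => |aCoef n| / 2 := by
      funext n
      rw [fourierCoeff_G_neg_nat n]
      simp [Complex.norm_real, Real.norm_eq_abs, abs_div]
    rw [he]
    exact summable_abs_aCoef.div_const 2

lemma hasSum_series (t : ℝ) :
    HasSum (fun n : ℕ => aCoef n * Real.cos ((n:ℝ) * t)) (gfun t + aCoef 0 / 2) := by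
  have hpoint := has_pointwise_sum_fourier_series_of_summable (f := Gmap) summable_fourierCoeff_G
    ((t : ℝ) : AddCircle (2*π))
  rw [Gmap_coe] at hpoint
  have hnat := hpoint.nat_add_neg
  have key : ∀ n : ℕ,
      (fourierCoeff (⇑Gmap) ((n:ℤ))) • (fourier ((n:ℤ)) ((t:ℝ) : AddCircle (2*π)))
        + (fourierCoeff (⇑Gmap) (-(n:ℤ))) • (fourier (-(n:ℤ)) ((t:ℝ) : AddCircle (2*π)))
      = ((aCoef n * Real.cos ((n:ℝ)*t) : ℝ) : ℂ) := by
    intro n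
    have hpic : ((π:ℝ):ℂ) ≠ 0 := Complex.ofReal_ne_zero.mpr Real.pi_ne_zero
    rw [fourierCoeff_G_nat, fourierCoeff_G_neg_nat, fourier_coe_apply, fourier_coe_apply,
      smul_eq_mul, smul_eq_mul]
    have h1 : 2 * (π:ℝ) * Complex.I * ((n:ℤ) : ℂ) * (t:ℝ) / ((2*π : ℝ):ℂ)
        = ((((n:ℝ)*t) : ℝ) : ℂ) * Complex.I := by
      push_cast
      field_simp
    have h2 : 2 * (π:ℝ) * Complex.I * (((-(n:ℤ) : ℤ)) : ℂ) * (t:ℝ) / ((2*π : ℝ):ℂ)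
        = -(((((n:ℝ)*t) : ℝ) : ℂ)) * Complex.I := by
      push_cast
      field_simp
    rw [h1, h2]
    have h3 : Complex.exp (((((n:ℝ)*t) : ℝ) : ℂ) * Complex.I)
        + Complex.exp (-((((n:ℝ)*t) : ℝ) : ℂ) * Complex.I)
        = 2 * ((Real.cos ((n:ℝ)*t) : ℝ) : ℂ) := by
      rw [← Complex.two_cos, Complex.ofReal_cos]
    rw [show ((aCoef n/2 : ℝ) : ℂ) * Complex.exp (((((n:ℝ)*t) : ℝ) : ℂ) * Complex.I)
        + ((aCoef n/2 : ℝ) : ℂ) * Complex.exp (-((((n:ℝ)*t) : ℝ) : ℂ) * Complex.I)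
        = ((aCoef n/2 : ℝ) : ℂ) * (Complex.exp (((((n:ℝ)*t) : ℝ) : ℂ) * Complex.I)
          + Complex.exp (-((((n:ℝ)*t) : ℝ) : ℂ) * Complex.I)) from by ring, h3]
    push_cast
    ring
  have hzero : (fourierCoeff (⇑Gmap) (0:ℤ)) • (fourier (0:ℤ) ((t:ℝ) : AddCircle (2*π)))
      = ((aCoef 0 / 2 : ℝ) : ℂ) := by
    rw [fourier_zero, smul_eq_mul, mul_one, show (0:ℤ) = ((0:ℕ):ℤ) from by norm_num,
      fourierCoeff_G_nat]
  have hnat2 : HasSum (fun n : ℕ => ((aCoef n * Real.cos ((n:ℝ)*t) : ℝ) : ℂ))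
      (((gfun t : ℝ) : ℂ) + ((aCoef 0 / 2 : ℝ) : ℂ)) := by
    rw [← hzero]
    exact (funext key ▸ hnat : _)
  have hre := Complex.reCLM.hasSum hnat2
  simp only [Function.comp, Complex.reCLM_apply, Complex.ofReal_re, Complex.add_re] at hre
  exact hre


theorem fourier_coefficients_of_g :
    aCoef 0 = 1 + 4 / Real.pi ∧
    aCoef 1 = -(1 / Real.pi) - 1 / 2 ∧
    (∀ n : ℕ, 2 ≤ n →
      (n % 4 = 0 → aCoef n = -(4 / (((n : ℝ) ^ 2 - 1) * Real.pi))) ∧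
      (n % 4 = 1 → aCoef n = -(2 / ((n : ℝ) * ((n : ℝ) + 1) * Real.pi))) ∧
      (n % 4 = 2 → aCoef n = 0) ∧
      (n % 4 = 3 → aCoef n = -(2 / ((n : ℝ) * ((n : ℝ) - 1) * Real.pi)))) ∧
    (∀ t : ℝ,
      Summable (fun n : ℕ => |aCoef (n + 1) * Real.cos (((n : ℝ) + 1) * t)|) ∧
      gfun t = aCoef 0 / 2 + ∑' n : ℕ, aCoef (n + 1) * Real.cos (((n : ℝ) + 1) * t)) := by
  refine ⟨aCoef_zero, aCoef_one, fun n hn => aCoef_cases n hn, fun t => ⟨?_, ?_⟩⟩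
  · have hs1 : Summable (fun n : ℕ => |aCoef (n+1)|) :=
      (summable_nat_add_iff 1).mpr summable_abs_aCoef
    apply Summable.of_nonneg_of_le (fun n => abs_nonneg _) (fun n => ?_) hs1
    rw [abs_mul]
    exact mul_le_of_le_one_right (abs_nonneg _) (Real.abs_cos_le_one _)
  · have h := hasSum_series t
    have hshift := (hasSum_nat_add_iff'
      (f := fun n : ℕ => aCoef n * Real.cos ((n:ℝ)*t)) 1).mpr h
    have e0 : (∑ i ∈ range 1, aCoef i * Real.cos ((i:ℝ)*t)) = aCoef 0 := by simp
    rw [e0] at hshift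
    have hfun : (fun n : ℕ => aCoef (n+1) * Real.cos ((((n+1) : ℕ):ℝ)*t))
        = fun n : ℕ => aCoef (n+1) * Real.cos (((n:ℝ)+1)*t) := by
      funext n
      norm_num
    rw [hfun] at hshift
    rw [hshift.tsum_eq]
    ring
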